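/- Let W : ℝ^N × ℝⁿ → ℝⁿ satisfy: there exist K, L ≥ 0 with |W(s,y)| ≤ K·|s| and |W(s,y) − W(s,y')| ≤ L·|s|·|y − y'| for all s, y, y'. Fix t ∈ ℝ^N, x ∈ ℝⁿ, and ε₀ ∈ [0,1]. Suppose ω₁, ω₂ : [0,1] → ℝⁿ are continuous with ω₁(0) = ω₂(0) = x, ω₁ is differentiable on (0,1] with ω₁'(ε) = (1/ε)·W(εt, ω₁(ε)), and ω₂ is differentiable on (0,1] with ω₂'(ε) = (1/ε)·W(ε(ε₀t), ω₂(ε)). Then ω₂(ε) = ω₁(ε₀·ε) for all ε ∈ [0,1]. -/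

import Mathlib

open Set

/-!
Two solutions of `ω' = ε⁻¹ W(εs, ω)` satisfy a Lipschitz bound with the constant `L‖s‖` on every
`[δ, 1]`, because the factor `ε⁻¹` is compensated by `‖εs‖ = ε‖s‖`. Grönwall's inequality on
`[δ, ε]` then bounds their distance at `ε` by their distance at `δ` times `exp (L‖s‖)`, which
tends to `0` as `δ → 0` by continuity at the common initial point. Since `ε ↦ ω₁(ε₀ε)` solves the
equation with `t` replaced by `ε₀t` (by the chain rule, or because `W(0, ·) = 0` when `ε₀ = 0`),
it coincides with `ω₂`.
-/

section Uniqueness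

variable {E : Type*} [NormedAddCommGroup E] [NormedSpace ℝ E]

theorem ODE_solution_unique_of_singular_left {v : ℝ → E → E} {K : NNReal} {f g : ℝ → E}
    {a b : ℝ} (hv : ∀ τ ∈ Ioo a b, LipschitzWith K (v τ))
    (hf : ContinuousOn f (Icc a b)) (hf' : ∀ τ ∈ Ioo a b, HasDerivWithinAt f (v τ (f τ)) (Ici τ) τ)
    (hg : ContinuousOn g (Icc a b)) (hg' : ∀ τ ∈ Ioo a b, HasDerivWithinAt g (v τ (g τ)) (Ici τ) τ)
    (ha : f a = g a) :
    EqOn f g (Icc a b) := by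
  rintro t ⟨hat, htb⟩
  rcases hat.eq_or_lt with rfl | hat
  · exact ha
  have hsub : Ioc a t ⊆ Icc a b := Ioc_subset_Icc_self.trans (Icc_subset_Icc_right htb)
  have gronwall : ∀ δ ∈ Ioc a t, dist (f t) (g t) ≤ dist (f δ) (g δ) * Real.exp (K * (t - δ)) := by
    rintro δ ⟨haδ, hδt⟩
    have hIco : Ico δ t ⊆ Ioo a b := fun τ hτ => ⟨haδ.trans_le hτ.1, hτ.2.trans_le htb⟩
    exact dist_le_of_trajectories_ODE_of_mem (s := fun _ => univ)
      (fun τ hτ => (hv τ (hIco hτ)).lipschitzOnWith) (hf.mono (Icc_subset_Icc haδ.le htb))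
      (fun τ hτ => hf' τ (hIco hτ)) (fun _ _ => trivial) (hg.mono (Icc_subset_Icc haδ.le htb))
      (fun τ hτ => hg' τ (hIco hτ)) (fun _ _ => trivial) le_rfl t ⟨hδt, le_rfl⟩
  have hdist : ContinuousWithinAt (fun δ => dist (f δ) (g δ)) (Icc a b) a :=
    (hf a (left_mem_Icc.2 (hat.le.trans htb))).dist (hg a (left_mem_Icc.2 (hat.le.trans htb)))
  have hbound_cont : ContinuousWithinAt
      (fun δ => dist (f δ) (g δ) * Real.exp (K * (t - δ))) (Ioc a t) a :=
    (hdist.mono hsub).mul (by fun_prop : Continuous _).continuousWithinAt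
  have hlim := continuousWithinAt_const.closure_le (by simp [closure_Ioc hat.ne, hat.le])
    hbound_cont gronwall
  simpa [ha] using hlim

end Uniqueness

section SingularODE

variable {F E : Type*} [NormedAddCommGroup F] [NormedSpace ℝ F]
  [NormedAddCommGroup E] [NormedSpace ℝ E]

def IsSingularODESolution (W : F → E → E) (s : F) (x : E) (ω : ℝ → E) : Prop :=
  ContinuousOn ω (Icc 0 1) ∧ ω 0 = x ∧
    ∀ ε ∈ Ioc (0 : ℝ) 1, HasDerivWithinAt ω (ε⁻¹ • W (ε • s) (ω ε)) (Icc 0 1) ε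

variable {W : F → E → E} {s : F} {x : E} {ω ω' : ℝ → E}

theorem lipschitzWith_inv_smul_apply_smul {L : ℝ}
    (hLip : ∀ s y y', ‖W s y - W s y'‖ ≤ L * ‖s‖ * ‖y - y'‖) {ε : ℝ} (hε : 0 < ε) :
    LipschitzWith (L * ‖s‖).toNNReal (fun y => ε⁻¹ • W (ε • s) y) := by
  refine LipschitzWith.of_dist_le' fun y y' => ?_
  rw [dist_smul₀, dist_eq_norm, dist_eq_norm, Real.norm_of_nonneg (inv_nonneg.2 hε.le)]
  calc ε⁻¹ * ‖W (ε • s) y - W (ε • s) y'‖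
      ≤ ε⁻¹ * (L * (ε * ‖s‖) * ‖y - y'‖) := by
        grw [hLip]
        rw [norm_smul, Real.norm_of_nonneg hε.le]
    _ = L * ‖s‖ * ‖y - y'‖ := by field_simp [hε.ne']

theorem IsSingularODESolution.eqOn {L : ℝ}
    (hLip : ∀ s y y', ‖W s y - W s y'‖ ≤ L * ‖s‖ * ‖y - y'‖)
    (hω : IsSingularODESolution W s x ω) (hω' : IsSingularODESolution W s x ω') :
    EqOn ω ω' (Icc 0 1) := by
  have hIci {f : ℝ → E} {f' : E} {τ : ℝ} (hτ : τ ∈ Ioo (0 : ℝ) 1)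
      (h : HasDerivWithinAt f f' (Icc 0 1) τ) : HasDerivWithinAt f f' (Ici τ) τ :=
    h.mono_of_mem_nhdsWithin (nhdsWithin_le_nhds (Icc_mem_nhds hτ.1 hτ.2))
  exact ODE_solution_unique_of_singular_left
    (fun τ hτ => lipschitzWith_inv_smul_apply_smul hLip hτ.1) hω.1
    (fun τ hτ => hIci hτ (hω.2.2 τ (Ioo_subset_Ioc_self hτ))) hω'.1
    (fun τ hτ => hIci hτ (hω'.2.2 τ (Ioo_subset_Ioc_self hτ))) (hω.2.1.trans hω'.2.1.symm)

theorem IsSingularODESolution.comp_const_mul (hW : ∀ y, W 0 y = 0) {c : ℝ}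
    (hc : c ∈ Icc (0 : ℝ) 1) (hω : IsSingularODESolution W s x ω) :
    IsSingularODESolution W (c • s) x (fun ε => ω (c * ε)) := by
  obtain ⟨hcont, h0, hderiv⟩ := hω
  have hmaps : MapsTo (c * ·) (Icc (0 : ℝ) 1) (Icc 0 1) :=
    fun ε hε => ⟨mul_nonneg hc.1 hε.1, mul_le_one₀ hc.2 hε.1 hε.2⟩
  refine ⟨hcont.comp (by fun_prop) hmaps, by simpa using h0, fun ε hε => ?_⟩
  rcases hc.1.eq_or_lt with rfl | hc0
  · simpa [hW, h0] using hasDerivWithinAt_const ε (Icc (0 : ℝ) 1) x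
  have hchain := (hderiv (c * ε) ⟨mul_pos hc0 hε.1, mul_le_one₀ hc.2 hε.1.le hε.2⟩).scomp ε
    (((hasDerivAt_id ε).const_mul c).hasDerivWithinAt.congr_deriv (mul_one c)) hmaps
  refine hchain.congr_deriv ?_
  rw [smul_smul, smul_smul, mul_inv, ← mul_assoc, mul_inv_cancel₀ hc0.ne', one_mul, mul_comm ε c]

end SingularODE

theorem stmt_4_general (N n : ℕ)
    (W : EuclideanSpace ℝ (Fin N) → EuclideanSpace ℝ (Fin n) → EuclideanSpace ℝ (Fin n))
    (K L : ℝ)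
    (hbound : ∀ s y, ‖W s y‖ ≤ K * ‖s‖)
    (hLip : ∀ s y y', ‖W s y - W s y'‖ ≤ L * ‖s‖ * ‖y - y'‖)
    (t : EuclideanSpace ℝ (Fin N)) (x : EuclideanSpace ℝ (Fin n))
    (ε₀ : ℝ) (hε₀ : ε₀ ∈ Icc (0:ℝ) 1)
    (ω₁ ω₂ : ℝ → EuclideanSpace ℝ (Fin n))
    (hc₁ : ContinuousOn ω₁ (Icc 0 1)) (hc₂ : ContinuousOn ω₂ (Icc 0 1))
    (h10 : ω₁ 0 = x) (h20 : ω₂ 0 = x)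
    (hd₁ : ∀ ε ∈ Ioc (0:ℝ) 1,
      HasDerivWithinAt ω₁ (ε⁻¹ • W (ε • t) (ω₁ ε)) (Icc 0 1) ε)
    (hd₂ : ∀ ε ∈ Ioc (0:ℝ) 1,
      HasDerivWithinAt ω₂ (ε⁻¹ • W (ε • (ε₀ • t)) (ω₂ ε)) (Icc 0 1) ε) :
    ∀ ε ∈ Icc (0:ℝ) 1, ω₂ ε = ω₁ (ε₀ * ε) := by
  have hW : ∀ y, W 0 y = 0 := fun y => norm_le_zero_iff.1 (by simpa using hbound 0 y)
  have hω₁ : IsSingularODESolution W t x ω₁ := ⟨hc₁, h10, hd₁⟩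
  exact fun ε hε =>
    IsSingularODESolution.eqOn hLip ⟨hc₂, h20, hd₂⟩ (hω₁.comp_const_mul hW hε₀) hε

/-- homogeneity of the solution of the singular ODE
`ω'(ε) = (1/ε) W(εt, ω(ε))`, `ω(0) = x`: the solution with `t` replaced by `ε₀ t`
is `ε ↦ ω(ε₀ ε)`. -/
theorem stmt_4 (N n : ℕ)
    (W : EuclideanSpace ℝ (Fin N) → EuclideanSpace ℝ (Fin n) → EuclideanSpace ℝ (Fin n))
    (K L : ℝ) (hK : 0 ≤ K) (hL : 0 ≤ L)
    (hbound : ∀ s y, ‖W s y‖ ≤ K * ‖s‖)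
    (hLip : ∀ s y y', ‖W s y - W s y'‖ ≤ L * ‖s‖ * ‖y - y'‖)
    (t : EuclideanSpace ℝ (Fin N)) (x : EuclideanSpace ℝ (Fin n))
    (ε₀ : ℝ) (hε₀ : ε₀ ∈ Icc (0:ℝ) 1)
    (ω₁ ω₂ : ℝ → EuclideanSpace ℝ (Fin n))
    (hc₁ : ContinuousOn ω₁ (Icc 0 1)) (hc₂ : ContinuousOn ω₂ (Icc 0 1))
    (h10 : ω₁ 0 = x) (h20 : ω₂ 0 = x)
    (hd₁ : ∀ ε ∈ Ioc (0:ℝ) 1,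
      HasDerivWithinAt ω₁ (ε⁻¹ • W (ε • t) (ω₁ ε)) (Icc 0 1) ε)
    (hd₂ : ∀ ε ∈ Ioc (0:ℝ) 1,
      HasDerivWithinAt ω₂ (ε⁻¹ • W (ε • (ε₀ • t)) (ω₂ ε)) (Icc 0 1) ε) :
    ∀ ε ∈ Icc (0:ℝ) 1, ω₂ ε = ω₁ (ε₀ * ε) :=
  stmt_4_general N n W K L hbound hLip t x ε₀ hε₀ ω₁ ω₂ hc₁ hc₂ h10 h20 hd₁ hd₂
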